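/- arXiv:2602.13610 — 5 statements merged into one kernel-verified Lean document; each statement's English description precedes it below -/
import Mathlib

section
/- Let I be a set of positions, A a set of nucleotide letters, and for each 'loop' z in a finite index set L let c(z) ⊆ I be a finite set of critical positions and g(z, ·) a real-valued function of assignments restricted to c(z). For finite loop sets L₁, L₂ ⊆ L, define the total energies E₁(x) = Σ_{z∈L₁} g(z, x↾c(z)) and E₂(x) = Σ_{z∈L₂} g(z, x↾c(z)) for assignments x : I → A. If two assignments x₁, x₂ : I → A agree on every position in Δ = ⋃_{z ∈ L₁ △ L₂} c(z) (the union of critical positions of loops in the symmetric difference of L₁ and L₂), then E₂(x₁) − E₁(x₁) = E₂(x₂) − E₁(x₂). -/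
/-- The free-energy difference between two loop sets depends only on the
differential positions: if two assignments agree on every critical position of
every loop in the symmetric difference `L₁ ∆ L₂`, then the energy differences
coincide. -/
theorem energy_difference_depends_only_on_differential_positions
    {I A Z : Type*} [DecidableEq I] [DecidableEq Z]
    (c : Z → Finset I) (g : (z : Z) → ({i // i ∈ c z} → A) → ℝ)
    (L₁ L₂ : Finset Z) (x₁ x₂ : I → A)
    (hagree : ∀ i ∈ (symmDiff L₁ L₂).biUnion c, x₁ i = x₂ i) :
    ((∑ z ∈ L₂, g z fun i => x₁ i.1) - ∑ z ∈ L₁, g z fun i => x₁ i.1) =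
      (∑ z ∈ L₂, g z fun i => x₂ i.1) - ∑ z ∈ L₁, g z fun i => x₂ i.1 := by
  have key : ∀ (x : I → A), ∀ z ∈ symmDiff L₁ L₂, (∀ i ∈ c z, x i = x₂ i) →
      g z (fun i => x i.1) = g z (fun i => x₂ i.1) := by
    intro x z _ h
    congr 1
    funext i
    exact h i.1 i.2
  have h1 : ∀ z ∈ L₂ \ L₁, g z (fun i => x₁ i.1) = g z (fun i => x₂ i.1) := by
    intro z hz
    have hzs : z ∈ symmDiff L₁ L₂ := by
      simp [Finset.mem_symmDiff, Finset.mem_sdiff] at hz ⊢; tauto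
    exact key x₁ z hzs fun i hi => hagree i (Finset.mem_biUnion.2 ⟨z, hzs, hi⟩)
  have h2 : ∀ z ∈ L₁ \ L₂, g z (fun i => x₁ i.1) = g z (fun i => x₂ i.1) := by
    intro z hz
    have hzs : z ∈ symmDiff L₁ L₂ := by
      simp [Finset.mem_symmDiff, Finset.mem_sdiff] at hz ⊢; tauto
    exact key x₁ z hzs fun i hi => hagree i (Finset.mem_biUnion.2 ⟨z, hzs, hi⟩)
  have split : ∀ (x : I → A),
      ((∑ z ∈ L₂, g z fun i => x i.1) - ∑ z ∈ L₁, g z fun i => x i.1) =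
      ((∑ z ∈ L₂ \ L₁, g z fun i => x i.1) + ∑ z ∈ L₂ ∩ L₁, g z fun i => x i.1)
        - ((∑ z ∈ L₁ \ L₂, g z fun i => x i.1) + ∑ z ∈ L₁ ∩ L₂, g z fun i => x i.1) := by
    intro x
    rw [← Finset.sum_inter_add_sum_sdiff L₂ L₁, ← Finset.sum_inter_add_sum_sdiff L₁ L₂]; ring
  rw [split x₁, split x₂, Finset.inter_comm L₂ L₁,
    Finset.sum_congr rfl h1, Finset.sum_congr rfl h2]
  ring
end

section
/- Let I be a set of positions, A a finite nonempty set of letters, and for each loop z in a finite index set L let c(z) ⊆ I be a finite set of critical positions and g(z, ·) a real-valued function of assignments restricted to c(z). For finite loop sets L₁, L₂ ⊆ L define D(x) = Σ_{z∈L₂} g(z, x↾c(z)) − Σ_{z∈L₁} g(z, x↾c(z)), and let Δ = ⋃_{z ∈ L₁ △ L₂} c(z) be the (finite) set of differential positions. Then for any nonempty set S of assignments x : I → A that is closed under modifying values outside Δ (i.e., if x ∈ S and x' agrees with x on Δ then x' ∈ S), the supremum of D over S equals the maximum of D over the finitely many restrictions of elements of S to Δ; in particular sup_{x∈S} D(x)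 is attained and can be computed by enumerating assignments to Δ only. -/
/-- Correctness of the differential-position enumeration: for any nonempty set
`S` of assignments closed under modifying values outside the differential
positions `Δ = ⋃_{z ∈ L₁ ∆ L₂} c z`, the energy difference `D` takes only
finitely many values on `S`, these values depend only on the restriction of the
assignment to `Δ`, and the supremum of `D` over `S` is attained (so it equals
the maximum of `D` over the finitely many restrictions to `Δ`). -/
theorem sup_energy_difference_by_enumerating_differential_positions
    {I A Z : Type*} [DecidableEq I] [DecidableEq Z] [Fintype A] [Nonempty A]
    (c : Z → Finset I) (g : (z : Z) → ({i // i ∈ c z} → A) → ℝ)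
    (L₁ L₂ : Finset Z)
    (D : (I → A) → ℝ)
    (hD : ∀ x, D x = (∑ z ∈ L₂, g z fun i => x i.1) - ∑ z ∈ L₁, g z fun i => x i.1)
    (S : Set (I → A)) (hS : S.Nonempty)
    (hclosed : ∀ x ∈ S, ∀ x' : I → A,
      (∀ i ∈ (symmDiff L₁ L₂).biUnion c, x' i = x i) → x' ∈ S) :
    (D '' S).Finite ∧
      (∀ x₁ ∈ S, ∀ x₂ ∈ S,
        (∀ i ∈ (symmDiff L₁ L₂).biUnion c, x₁ i = x₂ i) → D x₁ = D x₂) ∧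
      ∃ x₀ ∈ S, IsGreatest (D '' S) (D x₀) := by
  set Δ : Finset I := (symmDiff L₁ L₂).biUnion c with hΔ
  -- D only involves loops in the symmetric difference
  have hsplit : ∀ x : I → A,
      D x = (∑ z ∈ L₂ \ L₁, g z fun i => x i.1) - ∑ z ∈ L₁ \ L₂, g z fun i => x i.1 := by
    intro x
    rw [hD,
      ← Finset.sum_inter_add_sum_sdiff L₂ L₁ (fun z => g z fun i => x i.1),
      ← Finset.sum_inter_add_sum_sdiff L₁ L₂ (fun z => g z fun i => x i.1),
      Finset.inter_comm L₂ L₁]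
    ring
  -- the key invariance lemma
  have key : ∀ x₁ x₂ : I → A, (∀ i ∈ Δ, x₁ i = x₂ i) → D x₁ = D x₂ := by
    intro x₁ x₂ h
    rw [hsplit, hsplit]
    have hterm : ∀ z ∈ symmDiff L₁ L₂,
        (g z fun i => x₁ i.1) = g z fun i => x₂ i.1 := by
      intro z hz
      congr 1
      funext i
      exact h i.1 (Finset.mem_biUnion.2 ⟨z, hz, i.2⟩)
    have h₂ : ∀ z ∈ L₂ \ L₁, (g z fun i => x₁ i.1) = g z fun i => x₂ i.1 := by
      intro z hz
      exact hterm z (by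
        rw [Finset.mem_symmDiff]
        rcases Finset.mem_sdiff.1 hz with ⟨h1, h2⟩
        exact Or.inr ⟨h1, h2⟩)
    have h₁ : ∀ z ∈ L₁ \ L₂, (g z fun i => x₁ i.1) = g z fun i => x₂ i.1 := by
      intro z hz
      exact hterm z (by
        rw [Finset.mem_symmDiff]
        rcases Finset.mem_sdiff.1 hz with ⟨h1, h2⟩
        exact Or.inl ⟨h1, h2⟩)
    rw [Finset.sum_congr rfl h₂, Finset.sum_congr rfl h₁]
  -- finiteness: D on S factors through restrictions to Δ
  have hfin : (D '' S).Finite := by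
    classical
    set Φ : ({i // i ∈ Δ} → A) → ℝ := fun f =>
      D (fun i => if h : i ∈ Δ then f ⟨i, h⟩ else Classical.arbitrary A) with hΦ
    have hsub : D '' S ⊆ Set.range Φ := by
      rintro _ ⟨x, _, rfl⟩
      refine ⟨fun i => x i.1, ?_⟩
      refine key _ _ fun i hi => ?_
      simp [hi]
    exact (Set.finite_range Φ).subset hsub
  refine ⟨hfin, fun x₁ _ x₂ _ h => key x₁ x₂ h, ?_⟩
  have hne : (D '' S).Nonempty := hS.image D
  obtain ⟨m, hm, hmax⟩ := Set.Finite.exists_maximalFor id (D '' S) hfin hne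
  obtain ⟨x₀, hx₀, rfl⟩ := hm
  refine ⟨x₀, hx₀, ⟨⟨x₀, hx₀, rfl⟩, ?_⟩⟩
  rintro y hy
  by_contra hlt
  push_neg at hlt
  exact absurd (hmax hy (le_of_lt hlt)) (not_le.2 hlt)
end

section
/- Let Y be a finite nonempty set (the full ensemble), E : Y → ℝ, RT > 0. Let M_a and M_b be finite nonempty sets (the two constrained motif sub-ensembles) with energy functions E_a : M_a → ℝ and E_b : M_b → ℝ, let C ⊆ Y and let φ : C ≃ M_a × M_b be a bijection such that for some constant c ∈ ℝ, E(φ⁻¹(a, b)) = c + E_a(a) + E_b(b) for all (a,b) ∈ M_a × M_b. If y⋆ ∈ C with φ(y⋆) = (a⋆, b⋆), then the Boltzmann probability of y⋆ in Y satisfies p(y⋆) ≤ p_a(a⋆) · p_b(b⋆), where p_a(a⋆) = exp(−E_a(a⋆)/RT)/Σ_{a∈M_a} exp(−E_a(a)/RT) and p_b(b⋆) = exp(−E_b(b⋆)/RT)/Σ_{b∈M_b} exp(−E_b(b)/RT). -/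
/-- Binary probability decomposition: if the structures containing the boundary
pair form a set `C` in bijection with pairs of motif conformations, with
additive energy (up to a constant), then the Boltzmann probability of the
target is at most the product of the two motif-level Boltzmann probabilities. -/
theorem boltzmann_binary_decomposition {Y Ma Mb : Type*}
    [Fintype Y] [Nonempty Y] [Fintype Ma] [Nonempty Ma] [Fintype Mb] [Nonempty Mb]
    (E : Y → ℝ) (Ea : Ma → ℝ) (Eb : Mb → ℝ) (RT : ℝ) (hRT : 0 < RT)
    (C : Set Y) (φ : C ≃ Ma × Mb) (c : ℝ)
    (hE : ∀ ab : Ma × Mb, E (φ.symm ab : Y) = c + Ea ab.1 + Eb ab.2)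
    (ystar : Y) (hy : ystar ∈ C) (astar : Ma) (bstar : Mb)
    (hφ : φ ⟨ystar, hy⟩ = (astar, bstar)) :
    Real.exp (-E ystar / RT) / ∑ z, Real.exp (-E z / RT) ≤
      (Real.exp (-Ea astar / RT) / ∑ a, Real.exp (-Ea a / RT)) *
        (Real.exp (-Eb bstar / RT) / ∑ b, Real.exp (-Eb b / RT)) := by
  classical
  set Za := ∑ a, Real.exp (-Ea a / RT) with hZa
  set Zb := ∑ b, Real.exp (-Eb b / RT) with hZb
  set Z := ∑ z, Real.exp (-E z / RT) with hZ
  have hZa_pos : 0 < Za := Finset.sum_pos (fun a _ => Real.exp_pos _) Finset.univ_nonempty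
  have hZb_pos : 0 < Zb := Finset.sum_pos (fun b _ => Real.exp_pos _) Finset.univ_nonempty
  have hEy : E ystar = c + Ea astar + Eb bstar := by
    have h := hE (φ ⟨ystar, hy⟩)
    rw [Equiv.symm_apply_apply, hφ] at h
    exact h
  -- injection from Ma × Mb into Y
  set ψ : Ma × Mb → Y := fun ab => (φ.symm ab : Y) with hψ
  have hψinj : Function.Injective ψ := by
    intro x y h
    exact φ.symm.injective (Subtype.val_injective h)
  have hsum : ∑ ab : Ma × Mb, Real.exp (-E (ψ ab) / RT) ≤ Z := by
    rw [show (∑ ab : Ma × Mb, Real.exp (-E (ψ ab) / RT))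
        = ∑ y ∈ Finset.univ.image ψ, Real.exp (-E y / RT) from
      (Finset.sum_image (f := fun y => Real.exp (-E y / RT)) (g := ψ) (fun x _ y _ h => hψinj h)).symm]
    exact Finset.sum_le_sum_of_subset_of_nonneg (Finset.subset_univ _)
      (fun _ _ _ => (Real.exp_pos _).le)
  have hfac : ∑ ab : Ma × Mb, Real.exp (-E (ψ ab) / RT)
      = Real.exp (-c / RT) * (Za * Zb) := by
    rw [hZa, hZb, Finset.sum_mul_sum, Finset.mul_sum]
    rw [Fintype.sum_prod_type]
    refine Finset.sum_congr rfl fun a _ => ?_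
    rw [Finset.mul_sum]
    refine Finset.sum_congr rfl fun b _ => ?_
    rw [hψ, hE (a, b), ← Real.exp_add, ← Real.exp_add]
    ring_nf
  have hlow : 0 < Real.exp (-c / RT) * (Za * Zb) :=
    mul_pos (Real.exp_pos _) (mul_pos hZa_pos hZb_pos)
  have hZge : Real.exp (-c / RT) * (Za * Zb) ≤ Z := hfac ▸ hsum
  calc Real.exp (-E ystar / RT) / Z
      ≤ Real.exp (-E ystar / RT) / (Real.exp (-c / RT) * (Za * Zb)) :=
        div_le_div_of_nonneg_left (Real.exp_pos _).le hlow hZge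
    _ = (Real.exp (-Ea astar / RT) / Za) * (Real.exp (-Eb bstar / RT) / Zb) := by
        rw [hEy]
        rw [show -(c + Ea astar + Eb bstar) / RT
          = -c / RT + (-Ea astar / RT + -Eb bstar / RT) by ring,
          Real.exp_add, Real.exp_add]
        field_simp
end

section
/- Let Y be a finite nonempty set (the full ensemble), E : Y → ℝ, RT > 0. Let ι be a finite index set and for each i ∈ ι let M_i be a finite nonempty set (the constrained sub-ensemble of motif i) with energy E_i : M_i → ℝ. Let C ⊆ Y and let φ : C ≃ Π_{i∈ι} M_i be a bijection such that for some constant c ∈ ℝ, E(φ⁻¹(m)) = c + Σ_{i∈ι} E_i(m_i) for every m ∈ Π_{i∈ι} M_i. If y⋆ ∈ C with φ(y⋆) = (m⋆_i)_{i∈ι}, then the Boltzmann probability of y⋆ in Y satisfies p(y⋆) ≤ Π_{i∈ι} p_i(m⋆_i), where p_i(m⋆_i) = exp(−E_i(m⋆_i)/RT)/Σ_{m∈M_i} exp(−E_i(m)/RT). -/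
/-- Probability decomposition over non-overlapping motifs (Theorem 1 of the
paper, Boltzmann form): if the structures in which all boundary pairs form are
in bijection with tuples of motif conformations, with additive energy (up to a
constant), then the Boltzmann probability of the target structure is at most
the product of the motif-level Boltzmann probabilities. -/
theorem boltzmann_decomposition_over_motifs {Y : Type*} {ι : Type*}
    [Fintype Y] [Nonempty Y] [Fintype ι]
    (M : ι → Type*) [∀ i, Fintype (M i)] [∀ i, Nonempty (M i)]
    (E : Y → ℝ) (Ei : (i : ι) → M i → ℝ) (RT : ℝ) (hRT : 0 < RT)
    (C : Set Y) (φ : C ≃ ((i : ι) → M i)) (c : ℝ)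
    (hE : ∀ m : (i : ι) → M i, E (φ.symm m : Y) = c + ∑ i, Ei i (m i))
    (ystar : Y) (hy : ystar ∈ C) (mstar : (i : ι) → M i)
    (hφ : φ ⟨ystar, hy⟩ = mstar) :
    Real.exp (-E ystar / RT) / ∑ z, Real.exp (-E z / RT) ≤
      ∏ i, Real.exp (-Ei i (mstar i) / RT) / ∑ m, Real.exp (-Ei i m / RT) := by
  classical
  have hFC : Fintype C := Fintype.ofEquiv _ φ.symm
  set Zi : ι → ℝ := fun i => ∑ m, Real.exp (-Ei i m / RT) with hZi
  have hZipos : ∀ i, 0 < Zi i := fun i =>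
    Finset.sum_pos (fun m _ => Real.exp_pos _) Finset.univ_nonempty
  have hepos : (0:ℝ) < Real.exp (-c / RT) := Real.exp_pos _
  -- energy split
  have hsplit : ∀ m : (i : ι) → M i,
      Real.exp (-E (φ.symm m : Y) / RT) =
        Real.exp (-c / RT) * ∏ i, Real.exp (-Ei i (m i) / RT) := by
    intro m
    rw [hE m, neg_add, add_div, Real.exp_add, ← Real.exp_sum]
    congr 1
    rw [← Finset.sum_div, ← Finset.sum_neg_distrib]
  -- numerator
  have hyst : (φ.symm mstar : Y) = ystar := by
    rw [← hφ, Equiv.symm_apply_apply]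
  have hnum : Real.exp (-E ystar / RT) =
      Real.exp (-c / RT) * ∏ i, Real.exp (-Ei i (mstar i) / RT) := by
    rw [← hyst, hsplit]
  -- denominator bound
  have hCsum : ∑ z : C, Real.exp (-E (z : Y) / RT) =
      Real.exp (-c / RT) * ∏ i, Zi i := by
    rw [← φ.symm.sum_comp (fun z : C => Real.exp (-E (z : Y) / RT))]
    simp_rw [hsplit, ← Finset.mul_sum]
    congr 1
    rw [Finset.prod_univ_sum]
    rfl
  have hden : Real.exp (-c / RT) * ∏ i, Zi i ≤ ∑ z, Real.exp (-E z / RT) := by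
    rw [← hCsum]
    calc ∑ z : C, Real.exp (-E (z : Y) / RT)
        = ∑ z ∈ C.toFinset, Real.exp (-E z / RT) :=
          Finset.sum_set_coe (f := fun z => Real.exp (-E z / RT)) C
      _ ≤ ∑ z, Real.exp (-E z / RT) :=
          Finset.sum_le_sum_of_subset_of_nonneg (Finset.subset_univ _)
            (fun _ _ _ => (Real.exp_pos _).le)
  have hprodpos : 0 < ∏ i, Zi i := Finset.prod_pos fun i _ => hZipos i
  have h1 : Real.exp (-E ystar / RT) / ∑ z, Real.exp (-E z / RT)
      ≤ Real.exp (-E ystar / RT) / (Real.exp (-c / RT) * ∏ i, Zi i) :=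
    div_le_div_of_nonneg_left (Real.exp_pos _).le (mul_pos hepos hprodpos) hden
  have h2 : Real.exp (-E ystar / RT) / (Real.exp (-c / RT) * ∏ i, Zi i)
      = ∏ i, Real.exp (-Ei i (mstar i) / RT) / Zi i := by
    rw [hnum, mul_div_mul_left _ _ (ne_of_gt hepos), Finset.prod_div_distrib]
  exact h1.trans_eq h2
end

section
/- Let Y be a finite nonempty set, E : Y → ℝ, RT > 0. Let M be a finite nonempty set with energy E_m : M → ℝ and R a finite nonempty set with energy E_r : R → ℝ, let C ⊆ Y and φ : C ≃ M × R a bijection with E(φ⁻¹(m, r)) = c + E_m(m) + E_r(r) for some constant c. If y⋆ ∈ C with φ(y⋆) = (m⋆, r⋆), then the Boltzmann probability of y⋆ in Y satisfies p(y⋆) ≤ p_M(m⋆), where p_M(m⋆) = exp(−E_m(m⋆)/RT)/Σ_{m∈M} exp(−E_m(m)/RT). -/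
/-! Restricting the ensemble to the structures `C` in which the boundary pairs form can only
increase the probability of `y⋆ ∈ C`. On `C` the Boltzmann weight factorizes over `M × R`, so the
restricted probability of `y⋆` is the product `p_M(m⋆) · p_R(r⋆)` of the two marginal
probabilities, and `p_R(r⋆) ≤ 1`. -/

open Finset

lemma sum_subtype_le_sum_of_nonneg {Y : Type*} [Fintype Y] {w : Y → ℝ} (hw : ∀ y, 0 ≤ w y)
    (C : Set Y) [Fintype C] : ∑ z : C, w z ≤ ∑ z, w z := by
  rw [sum_set_coe]
  exact sum_le_univ_sum_of_nonneg hw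

lemma div_sum_le_div_sum_subtype {Y : Type*} [Fintype Y] {w : Y → ℝ} (hw : ∀ y, 0 ≤ w y)
    {C : Set Y} [Fintype C] (y : C) : w y / ∑ z, w z ≤ w y / ∑ z : C, w z := by
  rcases (hw y).eq_or_lt with hy | hy
  · simp [← hy]
  · have hC : 0 < ∑ z : C, w z :=
      hy.trans_le (single_le_sum (f := fun z : C => w z) (fun z _ => hw z) (mem_univ y))
    exact div_le_div_of_nonneg_left hy.le hC (sum_subtype_le_sum_of_nonneg hw C)

section ProductWeight

variable {M R : Type*} [Fintype M] [Fintype R]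

lemma sum_const_mul_mul_prod (k : ℝ) (u : M → ℝ) (v : R → ℝ) :
    ∑ mr : M × R, k * u mr.1 * v mr.2 = k * (∑ m, u m) * ∑ r, v r := by
  simp_rw [mul_assoc, ← mul_sum, Fintype.sum_mul_sum, Fintype.sum_prod_type]

lemma const_mul_mul_div_le_div_sum {k : ℝ} (hk : 0 < k) {u : M → ℝ} {v : R → ℝ}
    (hu : ∀ m, 0 < u m) (hv : ∀ r, 0 < v r) (m : M) (r : R) :
    k * u m * v r / (k * (∑ m, u m) * ∑ r, v r) ≤ u m / ∑ m, u m := by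
  have hU : 0 < ∑ m, u m := sum_pos (fun m _ => hu m) ⟨m, mem_univ m⟩
  have hV : v r ≤ ∑ r, v r := single_le_sum (fun r _ => (hv r).le) (mem_univ r)
  have hVpos : 0 < ∑ r, v r := (hv r).trans_le hV
  calc k * u m * v r / (k * (∑ m, u m) * ∑ r, v r)
      = u m / (∑ m, u m) * (v r / ∑ r, v r) := by field_simp
    _ ≤ u m / ∑ m, u m :=
        mul_le_of_le_one_right (div_pos (hu m) hU).le (div_le_one_of_le₀ hV hVpos.le)

theorem div_sum_le_div_sum_of_equiv_prod {Y : Type*} [Fintype Y] {w : Y → ℝ}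
    (hw : ∀ y, 0 ≤ w y) {C : Set Y} [Fintype C] (φ : C ≃ M × R) {k : ℝ} (hk : 0 < k)
    {u : M → ℝ} {v : R → ℝ} (hu : ∀ m, 0 < u m) (hv : ∀ r, 0 < v r)
    (hwφ : ∀ mr, w (φ.symm mr) = k * u mr.1 * v mr.2) (y : C) :
    w y / ∑ z, w z ≤ u (φ y).1 / ∑ m, u m := by
  obtain ⟨⟨m, r⟩, rfl⟩ := φ.symm.surjective y
  have hC : ∑ z : C, w z = k * (∑ m, u m) * ∑ r, v r := by
    rw [← φ.symm.sum_comp]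
    simp only [hwφ]
    exact sum_const_mul_mul_prod k u v
  calc w (φ.symm (m, r)) / ∑ z, w z
      ≤ w (φ.symm (m, r)) / ∑ z : C, w z := div_sum_le_div_sum_subtype hw _
    _ = k * u m * v r / (k * (∑ m, u m) * ∑ r, v r) := by rw [hC, hwφ]
    _ ≤ u m / ∑ m, u m := const_mul_mul_div_le_div_sum hk hu hv m r
    _ = u (φ (φ.symm (m, r))).1 / ∑ m, u m := by rw [φ.apply_symm_apply]

end ProductWeight

theorem boltzmann_single_motif_bound_general {Y M R : Type*}
    [Fintype Y] [Fintype M] [Fintype R]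
    (E : Y → ℝ) (Em : M → ℝ) (Er : R → ℝ) (RT : ℝ)
    (C : Set Y) (φ : C ≃ M × R) (c : ℝ)
    (hE : ∀ mr : M × R, E (φ.symm mr : Y) = c + Em mr.1 + Er mr.2)
    (ystar : Y) (hy : ystar ∈ C) (mstar : M) (rstar : R)
    (hφ : φ ⟨ystar, hy⟩ = (mstar, rstar)) :
    Real.exp (-E ystar / RT) / ∑ z, Real.exp (-E z / RT) ≤
      Real.exp (-Em mstar / RT) / ∑ m, Real.exp (-Em m / RT) := by
  classical
  have hweight : ∀ mr : M × R, Real.exp (-E (φ.symm mr) / RT) =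
      Real.exp (-c / RT) * Real.exp (-Em mr.1 / RT) * Real.exp (-Er mr.2 / RT) := by
    intro mr
    rw [hE, ← Real.exp_add, ← Real.exp_add]
    ring_nf
  have h := div_sum_le_div_sum_of_equiv_prod (w := fun y => Real.exp (-E y / RT))
    (u := fun m => Real.exp (-Em m / RT)) (v := fun r => Real.exp (-Er r / RT))
    (fun _ => (Real.exp_pos _).le) φ (Real.exp_pos _) (fun _ => Real.exp_pos _)
    (fun _ => Real.exp_pos _) hweight ⟨ystar, hy⟩
  rwa [hφ] at h

/-- Single-motif bound (CountingDesign): if the structures containing the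
motif's boundary pairs form a set `C` in bijection with pairs (motif
conformation, remainder conformation), with additive energy (up to a constant),
then the Boltzmann probability of the target structure is at most the
motif-level Boltzmann probability of its motif conformation. -/
theorem boltzmann_single_motif_bound {Y M R : Type*}
    [Fintype Y] [Nonempty Y] [Fintype M] [Nonempty M] [Fintype R] [Nonempty R]
    (E : Y → ℝ) (Em : M → ℝ) (Er : R → ℝ) (RT : ℝ) (hRT : 0 < RT)
    (C : Set Y) (φ : C ≃ M × R) (c : ℝ)
    (hE : ∀ mr : M × R, E (φ.symm mr : Y) = c + Em mr.1 + Er mr.2)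
    (ystar : Y) (hy : ystar ∈ C) (mstar : M) (rstar : R)
    (hφ : φ ⟨ystar, hy⟩ = (mstar, rstar)) :
    Real.exp (-E ystar / RT) / ∑ z, Real.exp (-E z / RT) ≤
      Real.exp (-Em mstar / RT) / ∑ m, Real.exp (-Em m / RT) :=
  boltzmann_single_motif_bound_general E Em Er RT C φ c hE ystar hy mstar rstar hφ
end
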